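/- Let n ≥ 4 be even, let p₁,…,p_{n−1} be odd integers and p_n ≠ 0 an even integer, and let M be the symmetrized Seifert linking matrix of the pretzel knot P(p₁,…,p_n) as defined in the context, regarded as a real symmetric matrix. Then the signature of M (the number of positive eigenvalues minus the number of negative eigenvalues, counted with multiplicity) equals −Σ_{i=1}^{n} sign(p_i)·(|p_i|−1) − sign((p₁⋯p_n) · σ_{n−1}(p₁,…,p_n)). (This is the signature of the pretzel knot P(p₁,…,p_n).) -/

import Mathlib

open Matrix

/-- `esym p a b j` is the `j`-th elementary symmetric polynomial of the values
`p a, p (a+1), …, p (b-1)`; in the 1-indexed notation of the paper, where `p i`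
denotes `p_{i+1}`, this is `σ_j(p_{a+1},…,p_b)`. -/
def esym (p : ℕ → ℤ) (a b j : ℕ) : ℤ :=
  ∑ s ∈ (Finset.Ico a b).powersetCard j, ∏ i ∈ s, p i

/-- `sgn p i = s_{i+1} = -sign(p_{i+1})` in the 1-indexed notation of the paper. -/
def sgn (p : ℕ → ℤ) (i : ℕ) : ℤ := -(p i).sign

/-- Index type for the symmetrized Seifert linking matrix of the pretzel knot
`P(p₁,…,pₙ)` with `n` even: pairs `(i,k)` with `1 ≤ i ≤ n`, `1 ≤ k ≤ |p_i|−1`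
(0-indexed here), together with one extra index `γ = Sum.inr ()`.  Its cardinality
is `N = ρ₁+⋯+ρₙ+1` where `ρ_i = |p_i|−1`. -/
abbrev QIdx (n : ℕ) (p : ℕ → ℤ) : Type :=
  (Σ i : Fin n, Fin ((p i).natAbs - 1)) ⊕ Unit

/-- Entries of the symmetrized Seifert linking matrix `M` of `P(p₁,…,pₙ)` (`n` even):
`M[(i,k),(i,k)] = 2s_i`, `M[(i,k),(i,l)] = s_i` for `k ≠ l`, `M[(i,k),(j,l)] = 0` for
`i ≠ j`, `M[(i,k),γ] = M[γ,(i,k)] = s_i`, `M[γ,γ] = s₁+⋯+sₙ`. -/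
def linkEf (n : ℕ) (p : ℕ → ℤ) : QIdx n p → QIdx n p → ℤ
  | Sum.inl ⟨i, k⟩, Sum.inl ⟨j, l⟩ =>
      if (i : ℕ) = (j : ℕ) then (if (k : ℕ) = (l : ℕ) then 2 * sgn p i else sgn p i) else 0
  | Sum.inl ⟨i, _⟩, Sum.inr _ => sgn p i
  | Sum.inr _, Sum.inl ⟨i, _⟩ => sgn p i
  | Sum.inr _, Sum.inr _ => ∑ i ∈ Finset.range n, sgn p i

/-- The symmetrized Seifert linking matrix of the pretzel knot `P(p₁,…,pₙ)`, `n` even. -/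
def linkE (n : ℕ) (p : ℕ → ℤ) : Matrix (QIdx n p) (QIdx n p) ℤ :=
  Matrix.of (linkEf n p)

open Matrix Finset

variable {ι : Type*} [Fintype ι] [DecidableEq ι]

lemma dot_mulVec_sum (M : Matrix ι ι ℝ) (x : ι → ℝ) {κ : Type*} [Fintype κ]
    (c : κ → ℝ) (v : κ → ι → ℝ) :
    x ⬝ᵥ M *ᵥ (∑ a, c a • v a) = ∑ a, c a * (x ⬝ᵥ M *ᵥ v a) := by
  rw [show M *ᵥ (∑ a, c a • v a) = ∑ a, c a • (M *ᵥ v a) by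
    simp [Matrix.mulVec_sum, Matrix.mulVec_smul]]
  rw [show x ⬝ᵥ (∑ a, c a • (M *ᵥ v a)) = ∑ a, x ⬝ᵥ (c a • (M *ᵥ v a)) by
    simp only [dotProduct, Finset.sum_apply, Finset.mul_sum]; rw [Finset.sum_comm]]
  exact Finset.sum_congr rfl fun a _ => by rw [dotProduct_smul, smul_eq_mul]

lemma quad_sum (M : Matrix ι ι ℝ) {κ : Type*} [Fintype κ] [DecidableEq κ]
    (c : κ → ℝ) (v : κ → ι → ℝ) (d : κ → ℝ)
    (hG : ∀ a b, v a ⬝ᵥ M *ᵥ v b = if a = b then d a else 0) :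
    (∑ a, c a • v a) ⬝ᵥ M *ᵥ (∑ a, c a • v a) = ∑ a, c a ^ 2 * d a := by
  rw [show (∑ a, c a • v a) ⬝ᵥ M *ᵥ (∑ a, c a • v a)
      = ∑ a, (c a • v a) ⬝ᵥ M *ᵥ (∑ b, c b • v b) by
    simp only [dotProduct, Finset.sum_mul, Finset.sum_apply]; rw [Finset.sum_comm]]
  have : ∀ a, (c a • v a) ⬝ᵥ M *ᵥ (∑ b, c b • v b) = c a ^ 2 * d a := by
    intro a
    rw [smul_dotProduct, smul_eq_mul, dot_mulVec_sum]
    rw [Finset.sum_eq_single a]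
    · rw [hG a a]; simp; ring
    · intro b _ hb; rw [hG a b, if_neg (Ne.symm hb), mul_zero]
    · simp
  simp [this]

lemma li_of_gram (M : Matrix ι ι ℝ) {κ : Type*} [Fintype κ] [DecidableEq κ]
    (v : κ → ι → ℝ) (d : κ → ℝ) (hd : ∀ a, d a ≠ 0)
    (hG : ∀ a b, v a ⬝ᵥ M *ᵥ v b = if a = b then d a else 0) :
    LinearIndependent ℝ v := by
  rw [Fintype.linearIndependent_iff]
  intro c hc a
  have h0 : v a ⬝ᵥ M *ᵥ (∑ b, c b • v b) = c a * d a := by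
    rw [dot_mulVec_sum]
    rw [Finset.sum_eq_single a]
    · rw [hG a a]; simp
    · intro b _ hb; rw [hG a b, if_neg (Ne.symm hb), mul_zero]
    · simp
  rw [hc] at h0
  simp only [Matrix.mulVec_zero, dotProduct_zero] at h0
  exact (mul_eq_zero.mp h0.symm).resolve_right (hd a)

lemma dim_bound (M : Matrix ι ι ℝ) (V W : Submodule ℝ (ι → ℝ))
    (hV : ∀ x ∈ V, x ≠ 0 → 0 < x ⬝ᵥ M *ᵥ x) (hW : ∀ x ∈ W, x ⬝ᵥ M *ᵥ x ≤ 0) :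
    Module.finrank ℝ V + Module.finrank ℝ W ≤ Fintype.card ι := by
  have hdisj : V ⊓ W = ⊥ := by
    rw [Submodule.eq_bot_iff]
    intro x hx
    by_contra hne
    exact absurd (hW x hx.2) (not_le.mpr (hV x hx.1 hne))
  have := Submodule.finrank_sup_add_finrank_inf_eq V W
  rw [hdisj] at this
  simp only [finrank_bot, add_zero] at this
  calc Module.finrank ℝ V + Module.finrank ℝ W = Module.finrank ℝ ↥(V ⊔ W) := this.symm
    _ ≤ Module.finrank ℝ (ι → ℝ) := Submodule.finrank_le _
    _ = Fintype.card ι := Module.finrank_fintype_fun_eq_card ℝ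

lemma count_pos_le (M : Matrix ι ι ℝ) (v u : ι → ι → ℝ) (d e : ι → ℝ)
    (hGv : ∀ a b, v a ⬝ᵥ M *ᵥ v b = if a = b then d a else 0)
    (hGu : ∀ a b, u a ⬝ᵥ M *ᵥ u b = if a = b then e a else 0)
    (hv : LinearIndependent ℝ v) (hu : LinearIndependent ℝ u) :
    (Finset.univ.filter fun a => 0 < d a).card ≤ (Finset.univ.filter fun a => 0 < e a).card := by
  classical
  set V : Submodule ℝ (ι → ℝ) :=
    Submodule.span ℝ (Set.range fun a : {a // 0 < d a} => v a) with hVdef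
  set W : Submodule ℝ (ι → ℝ) :=
    Submodule.span ℝ (Set.range fun a : {a // ¬ 0 < e a} => u a) with hWdef
  have hVrank : Module.finrank ℝ V = (Finset.univ.filter fun a => 0 < d a).card := by
    have hfr := finrank_span_eq_card (R := ℝ)
      (b := fun a : {a // 0 < d a} => v ↑a) (hv.comp _ Subtype.val_injective)
    rw [hVdef, hfr]
    simp [Fintype.card_subtype]
  have hWrank : Module.finrank ℝ W = (Finset.univ.filter fun a => ¬ 0 < e a).card := by
    have hfr := finrank_span_eq_card (R := ℝ)
      (b := fun a : {a // ¬ 0 < e a} => u ↑a) (hu.comp _ Subtype.val_injective)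
    rw [hWdef, hfr]
    simp [Fintype.card_subtype]
  have hVpos : ∀ x ∈ V, x ≠ 0 → 0 < x ⬝ᵥ M *ᵥ x := by
    intro x hx hne
    rw [hVdef, Submodule.mem_span_range_iff_exists_fun] at hx
    obtain ⟨c, hc⟩ := hx
    have hG' : ∀ a b : {a // 0 < d a},
        v ↑a ⬝ᵥ M *ᵥ v ↑b = if a = b then d ↑a else 0 := by
      intro a b
      rw [hGv]
      by_cases h : a = b
      · simp [h]
      · rw [if_neg (fun hh => h (Subtype.ext hh)), if_neg h]
    have hq := quad_sum M c (fun a : {a // 0 < d a} => v ↑a) (fun a => d ↑a) hG'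
    rw [hc] at hq
    rw [hq]
    have hcne : c ≠ 0 := by
      rintro rfl; simp at hc; exact hne hc.symm
    obtain ⟨a, ha⟩ := Function.ne_iff.mp hcne
    apply Finset.sum_pos'
    · intro b _
      exact mul_nonneg (sq_nonneg _) (le_of_lt b.2)
    · exact ⟨a, Finset.mem_univ a, mul_pos (sq_pos_of_ne_zero ha) a.2⟩
  have hWnp : ∀ x ∈ W, x ⬝ᵥ M *ᵥ x ≤ 0 := by
    intro x hx
    rw [hWdef, Submodule.mem_span_range_iff_exists_fun] at hx
    obtain ⟨c, hc⟩ := hx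
    have hG' : ∀ a b : {a // ¬ 0 < e a},
        u ↑a ⬝ᵥ M *ᵥ u ↑b = if a = b then e ↑a else 0 := by
      intro a b
      rw [hGu]
      by_cases h : a = b
      · simp [h]
      · rw [if_neg (fun hh => h (Subtype.ext hh)), if_neg h]
    have hq := quad_sum M c (fun a : {a // ¬ 0 < e a} => u ↑a) (fun a => e ↑a) hG'
    rw [hc] at hq
    rw [hq]
    apply Finset.sum_nonpos
    intro b _
    exact mul_nonpos_of_nonneg_of_nonpos (sq_nonneg _) (not_lt.mp b.2)
  have hb := dim_bound M V W hVpos hWnp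
  rw [hVrank, hWrank] at hb
  have hsplit := Finset.card_filter_add_card_filter_not
    (s := (Finset.univ : Finset ι)) (p := fun a => 0 < e a)
  rw [Finset.card_univ] at hsplit
  omega

lemma count_pos_eq (M : Matrix ι ι ℝ) (v u : ι → ι → ℝ) (d e : ι → ℝ)
    (hGv : ∀ a b, v a ⬝ᵥ M *ᵥ v b = if a = b then d a else 0)
    (hGu : ∀ a b, u a ⬝ᵥ M *ᵥ u b = if a = b then e a else 0)
    (hv : LinearIndependent ℝ v) (hu : LinearIndependent ℝ u) :
    (Finset.univ.filter fun a => 0 < d a).card = (Finset.univ.filter fun a => 0 < e a).card :=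
  le_antisymm (count_pos_le M v u d e hGv hGu hv hu) (count_pos_le M u v e d hGu hGv hu hv)

lemma count_neg_eq (M : Matrix ι ι ℝ) (v u : ι → ι → ℝ) (d e : ι → ℝ)
    (hGv : ∀ a b, v a ⬝ᵥ M *ᵥ v b = if a = b then d a else 0)
    (hGu : ∀ a b, u a ⬝ᵥ M *ᵥ u b = if a = b then e a else 0)
    (hv : LinearIndependent ℝ v) (hu : LinearIndependent ℝ u) :
    (Finset.univ.filter fun a => d a < 0).card = (Finset.univ.filter fun a => e a < 0).card := by
  have hGv' : ∀ a b, v a ⬝ᵥ (-M) *ᵥ v b = if a = b then -d a else 0 := by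
    intro a b; rw [Matrix.neg_mulVec, dotProduct_neg, hGv]; split <;> simp
  have hGu' : ∀ a b, u a ⬝ᵥ (-M) *ᵥ u b = if a = b then -e a else 0 := by
    intro a b; rw [Matrix.neg_mulVec, dotProduct_neg, hGu]; split <;> simp
  have := count_pos_eq (-M) v u (fun a => -d a) (fun a => -e a) hGv' hGu' hv hu
  simpa [neg_pos] using this

lemma eigen_dot (A : Matrix ι ι ℝ) (hA : A.IsHermitian) (a b : ι) :
    (⇑(hA.eigenvectorBasis a) : ι → ℝ) ⬝ᵥ ⇑(hA.eigenvectorBasis b) =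
      if a = b then 1 else 0 := by
  have h := hA.eigenvectorBasis.orthonormal
  rw [orthonormal_iff_ite] at h
  have h2 := h a b
  simpa [PiLp.inner_apply, RCLike.inner_apply, dotProduct, starRingEnd_apply, mul_comm] using h2

lemma eigen_gram (A : Matrix ι ι ℝ) (hA : A.IsHermitian) (a b : ι) :
    (⇑(hA.eigenvectorBasis a) : ι → ℝ) ⬝ᵥ A *ᵥ ⇑(hA.eigenvectorBasis b) =
      if a = b then hA.eigenvalues a else 0 := by
  rw [hA.mulVec_eigenvectorBasis, dotProduct_smul, smul_eq_mul, eigen_dot A hA a b]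
  split <;> rename_i h <;> simp [mul_comm, h]

lemma eigen_li (A : Matrix ι ι ℝ) (hA : A.IsHermitian) :
    LinearIndependent ℝ (fun j => (⇑(hA.eigenvectorBasis j) : ι → ℝ)) := by
  apply li_of_gram (1 : Matrix ι ι ℝ) _ (fun _ => (1:ℝ)) (fun _ => one_ne_zero)
  intro a b
  rw [Matrix.one_mulVec, eigen_dot A hA a b]

theorem inertia_main (A : Matrix ι ι ℝ) (hA : A.IsHermitian) (v : ι → ι → ℝ) (d : ι → ℝ)
    (hd : ∀ a, d a ≠ 0)
    (hGv : ∀ a b, v a ⬝ᵥ A *ᵥ v b = if a = b then d a else 0) :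
    ((Finset.univ.filter fun z => 0 < hA.eigenvalues z).card : ℤ) -
        ((Finset.univ.filter fun z => hA.eigenvalues z < 0).card : ℤ) =
      ((Finset.univ.filter fun a => 0 < d a).card : ℤ) -
        ((Finset.univ.filter fun a => d a < 0).card : ℤ) := by
  have hv := li_of_gram A v d hd hGv
  have hu := eigen_li A hA
  have h1 := count_pos_eq A v (fun j => (⇑(hA.eigenvectorBasis j) : ι → ℝ)) d hA.eigenvalues
    hGv (eigen_gram A hA) hv hu
  have h2 := count_neg_eq A v (fun j => (⇑(hA.eigenvectorBasis j) : ι → ℝ)) d hA.eigenvalues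
    hGv (eigen_gram A hA) hv hu
  rw [h1, h2]
-- concrete diagonalization
noncomputable section

def apR (p : ℕ → ℤ) (i : ℕ) : ℝ := ((p i).natAbs : ℝ)
def sR (p : ℕ → ℤ) (i : ℕ) : ℝ := ((sgn p i : ℤ) : ℝ)
def coeff (k j : ℕ) : ℝ := if j ≤ k then 1 else if j = k + 1 then -((k : ℝ) + 1) else 0
def sigC (r k : ℕ) : ℝ := if k + 1 < r then 0 else ((k : ℝ) + 1)

lemma sum_coeff (r k : ℕ) (hk : k < r) :
    ∑ j ∈ Finset.range r, coeff k j = sigC r k := by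
  have hsplit : ∀ j, coeff k j =
      (if j ≤ k then (1:ℝ) else 0) + (if j = k + 1 then -((k : ℝ) + 1) else 0) := by
    intro j; unfold coeff; split_ifs <;> first | (exfalso; omega) | ring
  rw [Finset.sum_congr rfl fun j _ => hsplit j, Finset.sum_add_distrib]
  have h1 : ∑ j ∈ Finset.range r, (if j ≤ k then (1:ℝ) else 0) = ((k:ℝ) + 1) := by
    rw [Finset.sum_boole]
    have : Finset.filter (fun j => j ≤ k) (Finset.range r) = Finset.range (k+1) := by
      ext x; simp [Finset.mem_range, Finset.mem_filter]; omega
    rw [this]; simp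
  have h2 : ∑ j ∈ Finset.range r, (if j = k + 1 then -((k : ℝ) + 1) else 0)
      = if k + 1 < r then -((k : ℝ) + 1) else 0 := by
    rw [Finset.sum_ite_eq' (Finset.range r) (k+1) fun _ => -((k:ℝ)+1)]
    simp [Finset.mem_range]
  rw [h1, h2]
  unfold sigC; split_ifs <;> ring

lemma sum_coeff_mul (r k l : ℕ) (hk : k < r) (hl : l < r) :
    (∑ j ∈ Finset.range r, coeff l j * coeff k j) + sigC r l * sigC r k
      = if l = k then ((k : ℝ) + 1) * ((k : ℝ) + 2) else 0 := by
  rcases eq_or_ne l k with rfl | hne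
  · have hsplit : ∀ j, coeff l j * coeff l j =
        (if j ≤ l then (1:ℝ) else 0) + (if j = l + 1 then ((l : ℝ) + 1)^2 else 0) := by
      intro j; unfold coeff; split_ifs <;> first | (exfalso; omega) | ring
    rw [Finset.sum_congr rfl fun j _ => hsplit j, Finset.sum_add_distrib]
    have h1 : ∑ j ∈ Finset.range r, (if j ≤ l then (1:ℝ) else 0) = ((l:ℝ) + 1) := by
      rw [Finset.sum_boole]
      have : Finset.filter (fun j => j ≤ l) (Finset.range r) = Finset.range (l+1) := by
        ext x; simp [Finset.mem_range, Finset.mem_filter]; omega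
      rw [this]; simp
    have h2 : ∑ j ∈ Finset.range r, (if j = l + 1 then ((l : ℝ) + 1)^2 else 0)
        = if l + 1 < r then ((l : ℝ) + 1)^2 else 0 := by
      rw [Finset.sum_ite_eq' (Finset.range r) (l+1) fun _ => ((l:ℝ)+1)^2]
      simp [Finset.mem_range]
    rw [h1, h2, if_pos rfl]
    by_cases h : l + 1 < r <;> simp only [sigC, if_pos, if_neg, h, if_true, if_false] <;> ring
  · -- wlog l < k via a helper
    have key : ∀ a b : ℕ, a < b → b < r →
        (∑ j ∈ Finset.range r, coeff a j * coeff b j) + sigC r a * sigC r b = 0 := by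
      intro a b hab hbr
      have hsplit : ∀ j, coeff a j * coeff b j =
          (if j ≤ a then (1:ℝ) else 0) + (if j = a + 1 then -((a : ℝ) + 1) else 0) := by
        intro j; unfold coeff; split_ifs <;> first | (exfalso; omega) | ring
      rw [Finset.sum_congr rfl fun j _ => hsplit j, Finset.sum_add_distrib]
      have h1 : ∑ j ∈ Finset.range r, (if j ≤ a then (1:ℝ) else 0) = ((a:ℝ) + 1) := by
        rw [Finset.sum_boole]
        have : Finset.filter (fun j => j ≤ a) (Finset.range r) = Finset.range (a+1) := by
          ext x; simp [Finset.mem_range, Finset.mem_filter]; omega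
        rw [this]; simp
      have h2 : ∑ j ∈ Finset.range r, (if j = a + 1 then -((a : ℝ) + 1) else 0)
          = -((a : ℝ) + 1) := by
        rw [Finset.sum_ite_eq' (Finset.range r) (a+1) fun _ => -((a:ℝ)+1)]
        rw [if_pos (Finset.mem_range.mpr (by omega))]
      have h3 : sigC r a = 0 := by unfold sigC; rw [if_pos (by omega)]
      rw [h1, h2, h3]; ring
    rw [if_neg hne]
    rcases Nat.lt_or_ge l k with h | h
    · exact key l k h hk
    · have hkl : k < l := by omega
      have hthis := key k l hkl hl
      calc (∑ j ∈ Finset.range r, coeff l j * coeff k j) + sigC r l * sigC r k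
          = (∑ j ∈ Finset.range r, coeff k j * coeff l j) + sigC r k * sigC r l := by
            rw [Finset.sum_congr rfl fun j _ => mul_comm _ _]; ring
        _ = 0 := hthis

variable (n : ℕ) (p : ℕ → ℤ)

def vfam : QIdx n p → QIdx n p → ℝ :=
  fun a u => match a, u with
  | Sum.inl ⟨i, k⟩, Sum.inl ⟨i', j⟩ => if (i' : ℕ) = (i : ℕ) then coeff k j else 0
  | Sum.inl _, Sum.inr _ => 0
  | Sum.inr _, Sum.inl ⟨i, _⟩ => -(apR p i)⁻¹
  | Sum.inr _, Sum.inr _ => 1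

def dfam : QIdx n p → ℝ :=
  fun a => match a with
  | Sum.inl ⟨i, k⟩ => sR p i * (((k : ℕ) : ℝ) + 1) * (((k : ℕ) : ℝ) + 2)
  | Sum.inr _ => ∑ i : Fin n, sR p i * (apR p i)⁻¹

abbrev ME : Matrix (QIdx n p) (QIdx n p) ℝ := (linkE n p).map (fun x : ℤ => (x : ℝ))

lemma ME_ll (i i' : Fin n) (j : Fin ((p i).natAbs - 1)) (j' : Fin ((p i').natAbs - 1)) :
    ME n p (Sum.inl ⟨i, j⟩) (Sum.inl ⟨i', j'⟩) =
      if (i : ℕ) = (i' : ℕ) then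
        (if (j : ℕ) = (j' : ℕ) then 2 * sR p i else sR p i) else 0 := by
  simp only [ME, linkE, Matrix.map_apply, Matrix.of_apply, linkEf, sR]
  push_cast [apply_ite (fun z : ℤ => (z : ℝ))]
  rfl

lemma ME_lr (i : Fin n) (j : Fin ((p i).natAbs - 1)) (u : Unit) :
    ME n p (Sum.inl ⟨i, j⟩) (Sum.inr u) = sR p i := rfl

lemma ME_rl (i : Fin n) (j : Fin ((p i).natAbs - 1)) (u : Unit) :
    ME n p (Sum.inr u) (Sum.inl ⟨i, j⟩) = sR p i := rfl

lemma ME_rr (u u' : Unit) :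
    ME n p (Sum.inr u) (Sum.inr u') = ∑ i : Fin n, sR p i := by
  simp only [ME, linkE, Matrix.map_apply, Matrix.of_apply, linkEf, sR]
  push_cast
  rw [← Fin.sum_univ_eq_sum_range (fun x => ((sgn p x : ℤ) : ℝ)) n]

lemma mulVec_split (x : QIdx n p → ℝ) (u : QIdx n p) :
    (ME n p *ᵥ x) u = (∑ i : Fin n, ∑ j : Fin ((p i).natAbs - 1),
      ME n p u (Sum.inl ⟨i, j⟩) * x (Sum.inl ⟨i, j⟩)) +
      ME n p u (Sum.inr ()) * x (Sum.inr ()) := by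
  rw [Matrix.mulVec, dotProduct, Fintype.sum_sum_type]
  rw [← Finset.univ_sigma_univ, Finset.sum_sigma]
  simp

lemma dot_split (x y : QIdx n p → ℝ) :
    x ⬝ᵥ y = (∑ i : Fin n, ∑ j : Fin ((p i).natAbs - 1),
      x (Sum.inl ⟨i, j⟩) * y (Sum.inl ⟨i, j⟩)) + x (Sum.inr ()) * y (Sum.inr ()) := by
  rw [dotProduct, Fintype.sum_sum_type]
  rw [← Finset.univ_sigma_univ, Finset.sum_sigma]
  simp

lemma vfam_inl_inl (i i' : Fin n) (k : Fin ((p i).natAbs - 1)) (j : Fin ((p i').natAbs - 1)) :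
    vfam n p (Sum.inl ⟨i, k⟩) (Sum.inl ⟨i', j⟩) =
      if (i' : ℕ) = (i : ℕ) then coeff k j else 0 := rfl

lemma mulVec_vfam_inl (i : Fin n) (k : Fin ((p i).natAbs - 1)) (u : QIdx n p) :
    (ME n p *ᵥ vfam n p (Sum.inl ⟨i, k⟩)) u =
      match u with
      | Sum.inl ⟨i', j⟩ => if (i' : ℕ) = (i : ℕ) then
          sR p i * (coeff k j + sigC ((p i).natAbs - 1) k) else 0
      | Sum.inr _ => sR p i * sigC ((p i).natAbs - 1) k := by
  have hk : (k : ℕ) < (p i).natAbs - 1 := k.2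
  rw [mulVec_split]
  cases u with
  | inl a =>
    obtain ⟨i', j⟩ := a
    simp only [ME_lr, vfam]
    rw [mul_zero, add_zero]
    by_cases hii : (i' : ℕ) = (i : ℕ)
    · have hii' : i' = i := Fin.ext hii
      subst hii'
      rw [Finset.sum_eq_single i']
      · have hterm : ∀ j'' : Fin ((p i').natAbs - 1),
            ME n p (Sum.inl ⟨i', j⟩) (Sum.inl ⟨i', j''⟩) *
              (if ((i' : Fin n) : ℕ) = (i' : ℕ) then coeff k j'' else 0)
            = sR p i' * coeff k j'' +
              (if j'' = j then sR p i' * coeff k j'' else 0) := by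
          intro j''
          rw [ME_ll, if_pos rfl, if_pos rfl]
          by_cases hjj : (j : ℕ) = (j'' : ℕ)
          · rw [if_pos hjj, if_pos (Fin.ext hjj.symm)]; ring
          · rw [if_neg hjj, if_neg (fun h => hjj (by rw [h]))]; ring
        rw [Finset.sum_congr rfl fun j'' _ => hterm j'', Finset.sum_add_distrib,
          Finset.sum_ite_eq' Finset.univ j (fun j'' => sR p i' * coeff k j''),
          if_pos (Finset.mem_univ j), ← Finset.mul_sum,
          Fin.sum_univ_eq_sum_range (fun m => coeff k m) _,
          sum_coeff _ _ hk, if_pos rfl]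
        ring
      · intro b _ hb
        apply Finset.sum_eq_zero
        intro j'' _
        rw [ME_ll, if_neg (fun h => hb (Fin.ext h.symm)), zero_mul]
      · simp
    · rw [if_neg hii]
      apply Finset.sum_eq_zero
      intro i'' _
      apply Finset.sum_eq_zero
      intro j'' _
      rw [ME_ll]
      by_cases h2 : (i' : ℕ) = (i'' : ℕ)
      · rw [if_neg (fun h : (i'' : ℕ) = (i : ℕ) => hii (h2.trans h)), mul_zero]
      · rw [if_neg h2, zero_mul]
  | inr uu =>
    simp only [ME_rr, vfam]
    rw [mul_zero, add_zero]
    rw [Finset.sum_eq_single i]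
    · have : ∀ j'' : Fin ((p i).natAbs - 1),
          ME n p (Sum.inr uu) (Sum.inl ⟨i, j''⟩) *
            (if ((i : Fin n) : ℕ) = (i : ℕ) then coeff k j'' else 0)
          = sR p i * coeff k j'' := by
        intro j''
        rw [ME_rl, if_pos rfl]
      rw [Finset.sum_congr rfl fun j'' _ => this j'', ← Finset.mul_sum,
        Fin.sum_univ_eq_sum_range (fun m => coeff k m) _, sum_coeff _ _ hk]
    · intro b _ hb
      apply Finset.sum_eq_zero
      intro j'' _
      rw [ME_rl, if_neg (fun h => hb (Fin.ext h)), mul_zero]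
    · simp

lemma apR_ne (hp : p i ≠ 0) : apR p i ≠ 0 := by
  simp only [apR, ne_eq, Nat.cast_eq_zero, Int.natAbs_eq_zero]
  exact hp

lemma rho_cast (hp : p i ≠ 0) : (((p i).natAbs - 1 : ℕ) : ℝ) = apR p i - 1 := by
  have h1 : 1 ≤ (p i).natAbs :=
    Nat.one_le_iff_ne_zero.mpr (by simpa [Int.natAbs_eq_zero] using hp)
  rw [Nat.cast_sub h1]; simp [apR]

lemma mulVec_vfam_inr (hp : ∀ i : Fin n, p (i : ℕ) ≠ 0) (u : QIdx n p) :
    (ME n p *ᵥ vfam n p (Sum.inr ())) u =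
      match u with
      | Sum.inl _ => 0
      | Sum.inr _ => ∑ i : Fin n, sR p i * (apR p i)⁻¹ := by
  rw [mulVec_split]
  cases u with
  | inl a =>
    obtain ⟨i', j⟩ := a
    simp only [ME_lr, vfam]
    rw [mul_one]
    have hsum : (∑ i'' : Fin n, ∑ j'' : Fin ((p i'').natAbs - 1),
        ME n p (Sum.inl ⟨i', j⟩) (Sum.inl ⟨i'', j''⟩) * (-(apR p i'')⁻¹)) = -sR p i' := by
      rw [Finset.sum_eq_single i']
      · have hterm : ∀ j'' : Fin ((p i').natAbs - 1),
            ME n p (Sum.inl ⟨i', j⟩) (Sum.inl ⟨i', j''⟩) * (-(apR p i')⁻¹)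
            = sR p i' * (-(apR p i')⁻¹) +
              (if j'' = j then sR p i' * (-(apR p i')⁻¹) else 0) := by
          intro j''
          rw [ME_ll, if_pos rfl]
          by_cases hjj : (j : ℕ) = (j'' : ℕ)
          · rw [if_pos hjj, if_pos (Fin.ext hjj.symm)]; ring
          · rw [if_neg hjj, if_neg (fun h => hjj (by rw [h]))]; ring
        rw [Finset.sum_congr rfl fun j'' _ => hterm j'', Finset.sum_add_distrib,
          Finset.sum_ite_eq' Finset.univ j (fun _ => sR p i' * (-(apR p i')⁻¹)),
          if_pos (Finset.mem_univ j), Finset.sum_const, Finset.card_univ,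
          Fintype.card_fin]
        rw [nsmul_eq_mul, rho_cast p (hp i')]
        have hne := apR_ne p (hp i')
        field_simp
        ring
      · intro b _ hb
        apply Finset.sum_eq_zero
        intro j'' _
        rw [ME_ll, if_neg (fun h => hb (Fin.ext h.symm)), zero_mul]
      · simp
    rw [hsum]
    ring
  | inr uu =>
    simp only [ME_rr, vfam]
    rw [mul_one]
    have hsum : ∀ i'' : Fin n, (∑ j'' : Fin ((p i'').natAbs - 1),
        ME n p (Sum.inr uu) (Sum.inl ⟨i'', j''⟩) * (-(apR p i'')⁻¹))
        = -sR p i'' + sR p i'' * (apR p i'')⁻¹ := by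
      intro i''
      have : ∀ j'' : Fin ((p i'').natAbs - 1),
          ME n p (Sum.inr uu) (Sum.inl ⟨i'', j''⟩) * (-(apR p i'')⁻¹)
          = sR p i'' * (-(apR p i'')⁻¹) := fun j'' => by rw [ME_rl]
      rw [Finset.sum_congr rfl fun j'' _ => this j'', Finset.sum_const, Finset.card_univ,
        Fintype.card_fin, nsmul_eq_mul, rho_cast p (hp i'')]
      have hne := apR_ne p (hp i'')
      field_simp
      ring
    rw [Finset.sum_congr rfl fun i'' _ => hsum i'', Finset.sum_add_distrib]
    have hz : ((∑ x : Fin n, -sR p (x : ℕ)) + ∑ i : Fin n, sR p (i : ℕ)) = 0 := by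
      rw [← Finset.sum_add_distrib]; simp
    linarith [hz]

theorem gram_vfam (hp : ∀ i : Fin n, p (i : ℕ) ≠ 0) (a b : QIdx n p) :
    vfam n p a ⬝ᵥ ME n p *ᵥ vfam n p b = if a = b then dfam n p a else 0 := by
  cases b with
  | inl bb =>
    obtain ⟨i, k⟩ := bb
    have hk : (k : ℕ) < (p i).natAbs - 1 := k.2
    rw [dot_split]
    simp only [mulVec_vfam_inl]
    cases a with
    | inl aa =>
      obtain ⟨i₂, l⟩ := aa
      have hl : (l : ℕ) < (p i₂).natAbs - 1 := l.2
      simp only [vfam]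
      rw [zero_mul, add_zero]
      by_cases hii : (i₂ : ℕ) = (i : ℕ)
      · have : i₂ = i := Fin.ext hii
        subst this
        rw [Finset.sum_eq_single i₂]
        · have hterm : ∀ j : Fin ((p i₂).natAbs - 1),
              (if ((i₂ : Fin n) : ℕ) = (i₂ : ℕ) then coeff l j else 0) *
                (if ((i₂ : Fin n) : ℕ) = (i₂ : ℕ) then
                  sR p i₂ * (coeff k j + sigC ((p i₂).natAbs - 1) k) else 0)
              = sR p i₂ * (coeff l j * coeff k j) +
                sR p i₂ * sigC ((p i₂).natAbs - 1) k * coeff l j := by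
            intro j; rw [if_pos rfl, if_pos rfl]; ring
          rw [Finset.sum_congr rfl fun j _ => hterm j, Finset.sum_add_distrib,
            ← Finset.mul_sum, ← Finset.mul_sum,
            Fin.sum_univ_eq_sum_range (fun m => coeff l m * coeff k m) _,
            Fin.sum_univ_eq_sum_range (fun m => coeff l m) _,
            sum_coeff _ _ hl]
          have hmul := sum_coeff_mul ((p i₂).natAbs - 1) k l hk hl
          by_cases hlk : (l : ℕ) = (k : ℕ)
          · have : l = k := Fin.ext hlk
            subst this
            rw [if_pos rfl] at hmul ⊢
            simp only [dfam]
            linear_combination sR p (i₂ : ℕ) * hmul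
          · have hne : (Sum.inl ⟨i₂, l⟩ : QIdx n p) ≠ Sum.inl ⟨i₂, k⟩ := by
              intro h
              exact hlk (congrArg (fun x : Fin ((p i₂).natAbs - 1) => (x : ℕ))
                (eq_of_heq (Sigma.mk.inj_iff.mp (Sum.inl.inj h)).2))
            rw [if_neg hlk] at hmul
            rw [if_neg hne]
            linear_combination sR p (i₂ : ℕ) * hmul
        · intro b _ hb
          apply Finset.sum_eq_zero
          intro j _
          rw [if_neg (fun h => hb (Fin.ext h)), zero_mul]
        · simp
      · have hne : (Sum.inl ⟨i₂, l⟩ : QIdx n p) ≠ Sum.inl ⟨i, k⟩ := by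
          intro h
          exact hii (congrArg (fun x : Fin n => (x : ℕ))
            (Sigma.mk.inj_iff.mp (Sum.inl.inj h)).1)
        rw [if_neg hne]
        apply Finset.sum_eq_zero
        intro i' _
        apply Finset.sum_eq_zero
        intro j _
        by_cases h2 : (i' : ℕ) = (i₂ : ℕ)
        · rw [if_neg (fun h : (i' : ℕ) = (i : ℕ) => hii (h2.symm.trans h)), mul_zero]
        · rw [if_neg h2, zero_mul]
    | inr uu =>
      simp only [vfam]
      have hne : (Sum.inr uu : QIdx n p) ≠ Sum.inl ⟨i, k⟩ := by simp
      rw [if_neg hne]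
      have hsum : (∑ i' : Fin n, ∑ j : Fin ((p i').natAbs - 1),
          -(apR p i')⁻¹ * (if (i' : ℕ) = (i : ℕ) then
            sR p i * (coeff k j + sigC ((p i).natAbs - 1) k) else 0))
          = -(sR p i * sigC ((p i).natAbs - 1) k) := by
        rw [Finset.sum_eq_single i]
        · have hterm : ∀ j : Fin ((p i).natAbs - 1),
              -(apR p i)⁻¹ * (if ((i : Fin n) : ℕ) = (i : ℕ) then
                sR p i * (coeff k j + sigC ((p i).natAbs - 1) k) else 0)
              = -(apR p i)⁻¹ * sR p i * coeff k j +
                -(apR p i)⁻¹ * sR p i * sigC ((p i).natAbs - 1) k := by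
            intro j; rw [if_pos rfl]; ring
          rw [Finset.sum_congr rfl fun j _ => hterm j, Finset.sum_add_distrib,
            ← Finset.mul_sum, Fin.sum_univ_eq_sum_range (fun m => coeff k m) _,
            sum_coeff _ _ hk, Finset.sum_const, Finset.card_univ, Fintype.card_fin,
            nsmul_eq_mul, rho_cast p (hp i)]
          have hne2 := apR_ne p (hp i)
          field_simp
          ring
        · intro b _ hb
          apply Finset.sum_eq_zero
          intro j _
          rw [if_neg (fun h => hb (Fin.ext h)), mul_zero]
        · simp
      rw [hsum]
      ring
  | inr uu =>
    rw [dot_split]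
    simp only [mulVec_vfam_inr n p hp]
    cases a with
    | inl aa =>
      obtain ⟨i₂, l⟩ := aa
      have hne : (Sum.inl ⟨i₂, l⟩ : QIdx n p) ≠ Sum.inr uu := by simp
      rw [if_neg hne]
      simp [vfam]
    | inr uu2 =>
      have : uu2 = uu := rfl
      simp [vfam, dfam]

lemma esym_eq (hn : 1 ≤ n) :
    esym p 0 n (n - 1) = ∑ i ∈ Finset.range n, ∏ j ∈ (Finset.range n).erase i, p j := by
  unfold esym
  rw [← Finset.range_eq_Ico]
  have himg : Finset.powersetCard (n - 1) (Finset.range n)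
      = (Finset.range n).image (fun i => (Finset.range n).erase i) := by
    ext s
    simp only [Finset.mem_powersetCard, Finset.mem_image]
    constructor
    · rintro ⟨hsub, hcard⟩
      have hc1 : (Finset.range n \ s).card = 1 := by
        rw [Finset.card_sdiff_of_subset hsub, Finset.card_range, hcard]
        omega
      obtain ⟨a, ha⟩ := Finset.card_eq_one.mp hc1
      have haR : a ∈ Finset.range n := by
        have : a ∈ Finset.range n \ s := ha ▸ Finset.mem_singleton_self a
        exact (Finset.mem_sdiff.mp this).1
      refine ⟨a, haR, ?_⟩
      rw [Finset.erase_eq, ← ha]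
      exact Finset.sdiff_sdiff_eq_self hsub
    · rintro ⟨a, haR, rfl⟩
      exact ⟨Finset.erase_subset _ _, by rw [Finset.card_erase_of_mem haR, Finset.card_range]⟩
  rw [himg, Finset.sum_image]
  intro a ha b hb hab
  by_contra hne
  have : a ∈ (Finset.range n).erase b := Finset.mem_erase.mpr ⟨hne, ha⟩
  rw [← show (Finset.range n).erase a = (Finset.range n).erase b from hab] at this
  exact (Finset.notMem_erase a _) this

lemma esym_odd (hn : 1 ≤ n) (hpodd : ∀ i, i < n - 1 → Odd (p i))
    (hpeven : Even (p (n - 1))) : Odd (esym p 0 n (n - 1)) := by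
  rw [esym_eq n p hn]
  have hmem : n - 1 ∈ Finset.range n := Finset.mem_range.mpr (by omega)
  rw [← Finset.add_sum_erase _ _ hmem]
  apply Odd.add_even
  · have herase : (Finset.range n).erase (n - 1) = Finset.range (n - 1) := by
      ext x; simp only [Finset.mem_erase, Finset.mem_range]; omega
    rw [herase]
    apply Finset.prod_induction _ Odd (fun a b => Odd.mul) odd_one
    intro i hi
    exact hpodd i (Finset.mem_range.mp hi)
  · apply Finset.sum_induction _ Even (fun a b => Even.add) Even.zero
    intro i hi
    have h1 : n - 1 ∈ (Finset.range n).erase i := by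
      rw [Finset.mem_erase] at hi ⊢
      exact ⟨fun h => hi.1 h.symm, hmem⟩
    obtain ⟨c, hc⟩ := hpeven
    obtain ⟨t, ht⟩ := Finset.dvd_prod_of_mem p h1
    exact ⟨c * t, by rw [ht, hc]; ring⟩

lemma sR_inv (i : ℕ) (hp : p i ≠ 0) : sR p i * (apR p i)⁻¹ = -((p i : ℝ))⁻¹ := by
  have hab : apR p i = |(p i : ℝ)| := by unfold apR; rw [Nat.cast_natAbs, Int.cast_abs]
  unfold sR sgn
  rcases lt_trichotomy (p i) 0 with h | h | h
  · rw [Int.sign_eq_neg_one_of_neg h, hab]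
    have hx : (p i : ℝ) < 0 := by exact_mod_cast h
    rw [abs_of_neg hx, inv_neg]
    push_cast
    ring
  · exact absurd h hp
  · rw [Int.sign_eq_one_of_pos h, hab]
    have hx : (0:ℝ) < (p i : ℝ) := by exact_mod_cast h
    rw [abs_of_pos hx]
    push_cast
    ring

lemma dgamma_eq (hp : ∀ i ∈ Finset.range n, p i ≠ 0) :
    (∑ i : Fin n, sR p (i : ℕ) * (apR p (i : ℕ))⁻¹)
      = -∑ i ∈ Finset.range n, ((p i : ℝ))⁻¹ := by
  rw [Fin.sum_univ_eq_sum_range (fun i => sR p i * (apR p i)⁻¹) n]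
  rw [Finset.sum_congr rfl fun i hi => sR_inv p i (hp i hi)]
  rw [Finset.sum_neg_distrib]

lemma cast_T (hn : 1 ≤ n) (hp : ∀ i ∈ Finset.range n, p i ≠ 0) :
    (((∏ j ∈ Finset.range n, p j) * esym p 0 n (n - 1) : ℤ) : ℝ)
      = -(∏ j ∈ Finset.range n, (p j : ℝ))^2 *
          (∑ i : Fin n, sR p (i : ℕ) * (apR p (i : ℕ))⁻¹) := by
  rw [dgamma_eq n p hp, esym_eq n p hn]
  push_cast
  rw [Finset.mul_sum, neg_mul_neg, Finset.mul_sum]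
  apply Finset.sum_congr rfl
  intro i hi
  have hPR : (∏ j ∈ Finset.range n, (p j : ℝ))
      = (p i : ℝ) * ∏ j ∈ (Finset.range n).erase i, (p j : ℝ) :=
    (Finset.mul_prod_erase _ _ hi).symm
  have hpi : (p i : ℝ) ≠ 0 := Int.cast_ne_zero.mpr (hp i hi)
  rw [hPR]
  field_simp

/-- The signature of the symmetrized Seifert linking matrix of `P(p₁,…,pₙ)` (`n` even),
i.e. the number of positive eigenvalues minus the number of negative eigenvalues of
`M` as a real symmetric matrix, equals
`−Σ_{i=1}^{n} sign(p_i)·(|p_i|−1) − sign((p₁⋯pₙ)·σ_{n−1}(p₁,…,pₙ))`. -/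

theorem stmt14 (n : ℕ) (hn : 4 ≤ n) (heven : Even n) (p : ℕ → ℤ)
    (hpodd : ∀ i, i < n - 1 → Odd (p i)) (hpeven : Even (p (n - 1)))
    (hpne : p (n - 1) ≠ 0)
    (hM : ((linkE n p).map (fun x : ℤ => (x : ℝ))).IsHermitian) :
    ((Finset.univ.filter fun z => 0 < hM.eigenvalues z).card : ℤ) -
        ((Finset.univ.filter fun z => hM.eigenvalues z < 0).card : ℤ) =
      -(∑ i ∈ Finset.range n, (p i).sign * (((p i).natAbs : ℤ) - 1)) -
        ((∏ j ∈ Finset.range n, p j) * esym p 0 n (n - 1)).sign := by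
  classical
  have hp0 : ∀ i ∈ Finset.range n, p i ≠ 0 := by
    intro i hi
    rcases Nat.lt_or_ge i (n - 1) with h | h
    · intro h0
      have := hpodd i h
      rw [h0] at this
      exact (Int.not_odd_iff_even.mpr Even.zero) this
    · have hin : i < n := Finset.mem_range.mp hi
      have : i = n - 1 := by omega
      rw [this]; exact hpne
  have hpF : ∀ i : Fin n, p (i : ℕ) ≠ 0 := fun i => hp0 i (Finset.mem_range.mpr i.2)
  have hσ := esym_odd n p (by omega) hpodd hpeven
  have hσ0 : esym p 0 n (n - 1) ≠ 0 := by
    intro h; rw [h] at hσ; exact (Int.not_odd_iff_even.mpr Even.zero) hσ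
  have hprod0 : (∏ j ∈ Finset.range n, p j) ≠ 0 := Finset.prod_ne_zero_iff.mpr hp0
  have hT0 : (∏ j ∈ Finset.range n, p j) * esym p 0 n (n - 1) ≠ 0 := mul_ne_zero hprod0 hσ0
  have hcast := cast_T n p (by omega) hp0
  have hPRne : (∏ j ∈ Finset.range n, (p j : ℝ)) ≠ 0 := by
    have := Int.cast_ne_zero (α := ℝ) |>.mpr hprod0
    rwa [Int.cast_prod] at this
  have hPR2 : (0:ℝ) < (∏ j ∈ Finset.range n, (p j : ℝ))^2 := by positivity
  have hdγ0 : (∑ i : Fin n, sR p (i : ℕ) * (apR p (i : ℕ))⁻¹) ≠ 0 := by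
    intro h
    rw [h, mul_zero] at hcast
    exact (Int.cast_ne_zero (α := ℝ) |>.mpr hT0) hcast
  have hsR : ∀ i : Fin n, sR p (i : ℕ) ≠ 0 := by
    intro i
    unfold sR sgn
    simp only [ne_eq, Int.cast_eq_zero, neg_eq_zero, Int.sign_eq_zero_iff_zero]
    exact hpF i
  have hd : ∀ a, dfam n p a ≠ 0 := by
    intro a
    cases a with
    | inl aa =>
      obtain ⟨i, k⟩ := aa
      simp only [dfam]
      have h1 : (((k:ℕ):ℝ) + 1) ≠ 0 := by positivity
      have h2 : (((k:ℕ):ℝ) + 2) ≠ 0 := by positivity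
      exact mul_ne_zero (mul_ne_zero (hsR i) h1) h2
    | inr uu => exact hdγ0
  have hmain := inertia_main (ME n p) hM (vfam n p) (dfam n p) hd (gram_vfam n p hpF)
  rw [hmain]
  -- turn cardinalities into sums
  have hcard : ∀ (P : QIdx n p → Prop) (_ : DecidablePred P),
      (((Finset.univ.filter P).card : ℤ)) = ∑ a : QIdx n p, (if P a then (1:ℤ) else 0) := by
    intro P hP
    rw [Finset.card_filter]
    push_cast [apply_ite (fun m : ℕ => (m : ℤ))]
    rfl
  rw [hcard _ _, hcard _ _, ← Finset.sum_sub_distrib]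
  rw [Fintype.sum_sum_type, ← Finset.univ_sigma_univ, Finset.sum_sigma]
  -- the inl part
  have hinl : ∀ (i : Fin n) (k : Fin ((p (i:ℕ)).natAbs - 1)),
      ((if 0 < dfam n p (Sum.inl ⟨i, k⟩) then (1:ℤ) else 0) -
        (if dfam n p (Sum.inl ⟨i, k⟩) < 0 then (1:ℤ) else 0)) = -(p (i:ℕ)).sign := by
    intro i k
    dsimp only [dfam]
    rcases lt_trichotomy (p (i:ℕ)) 0 with h | h | h
    · have hs : sR p (i:ℕ) = 1 := by
        unfold sR sgn; rw [Int.sign_eq_neg_one_of_neg h]; norm_num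
      have hpos : 0 < sR p (i:ℕ) * (((k:ℕ):ℝ) + 1) * (((k:ℕ):ℝ) + 2) := by
        rw [hs]; positivity
      simp only [hpos, not_lt.mpr hpos.le, if_true, if_false, Int.sign_eq_neg_one_of_neg h]
      norm_num
    · exact absurd h (hpF i)
    · have hs : sR p (i:ℕ) = -1 := by
        unfold sR sgn; rw [Int.sign_eq_one_of_pos h]; norm_num
      have hneg : sR p (i:ℕ) * (((k:ℕ):ℝ) + 1) * (((k:ℕ):ℝ) + 2) < 0 := by
        rw [hs]
        have : (0:ℝ) < (((k:ℕ):ℝ) + 1) * (((k:ℕ):ℝ) + 2) := by positivity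
        nlinarith
      simp only [hneg, not_lt.mpr hneg.le, if_true, if_false, Int.sign_eq_one_of_pos h]
      norm_num
  rw [Finset.sum_congr rfl fun i _ => Finset.sum_congr rfl fun k _ => hinl i k]
  have hunit : (∑ _x : Unit, ((if 0 < dfam n p (Sum.inr _x) then (1:ℤ) else 0) -
      if dfam n p (Sum.inr _x) < 0 then (1:ℤ) else 0))
      = -((∏ j ∈ Finset.range n, p j) * esym p 0 n (n - 1)).sign := by
    simp only [Finset.univ_unique, Finset.sum_singleton]
    dsimp only [dfam]
    rcases lt_trichotomy ((∏ j ∈ Finset.range n, p j) * esym p 0 n (n - 1)) 0 with h | h | h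
    · have hTR : (((∏ j ∈ Finset.range n, p j) * esym p 0 n (n - 1) : ℤ) : ℝ) < 0 := by
        exact_mod_cast h
      rw [hcast] at hTR
      have hdpos : 0 < ∑ i : Fin n, sR p (i : ℕ) * (apR p (i : ℕ))⁻¹ := by nlinarith
      simp only [hdpos, not_lt.mpr hdpos.le, if_true, if_false, Int.sign_eq_neg_one_of_neg h]
      norm_num
    · exact absurd h hT0
    · have hTR : (0:ℝ) < (((∏ j ∈ Finset.range n, p j) * esym p 0 n (n - 1) : ℤ) : ℝ) := by
        exact_mod_cast h
      rw [hcast] at hTR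
      have hdneg : (∑ i : Fin n, sR p (i : ℕ) * (apR p (i : ℕ))⁻¹) < 0 := by nlinarith
      simp only [hdneg, not_lt.mpr hdneg.le, if_true, if_false, Int.sign_eq_one_of_pos h]
      norm_num
  have hA : (∑ i : Fin n, ∑ _k : Fin ((p (i:ℕ)).natAbs - 1), -(p (i:ℕ)).sign)
      = -∑ i ∈ Finset.range n, (p i).sign * (((p i).natAbs : ℤ) - 1) := by
    have hper : ∀ i : Fin n, (∑ _k : Fin ((p (i:ℕ)).natAbs - 1), -(p (i:ℕ)).sign)
        = (((p (i:ℕ)).natAbs - 1 : ℕ) : ℤ) * (-(p (i:ℕ)).sign) := by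
      intro i
      rw [Finset.sum_const, Finset.card_univ, Fintype.card_fin, nsmul_eq_mul]
    rw [Finset.sum_congr rfl fun i _ => hper i,
      Fin.sum_univ_eq_sum_range (fun i => (((p i).natAbs - 1 : ℕ) : ℤ) * (-(p i).sign)) n,
      ← Finset.sum_neg_distrib]
    apply Finset.sum_congr rfl
    intro i hi
    have h1 : 1 ≤ (p i).natAbs :=
      Nat.one_le_iff_ne_zero.mpr (by simpa [Int.natAbs_eq_zero] using hp0 i hi)
    rw [Nat.cast_sub h1]
    push_cast
    ring
  rw [hA, hunit]
  ring
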